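/- (Supporting hyperplane property of the relaxed problem.) Let n ≥ 1, let M ⊆ ℝⁿ be a nonempty set, let p₁,…,p_N ∈ ℝⁿ, and for (ω, ν) ∈ ℝⁿ × ℝ define the objective F(ω, ν) = Σ_{i=1}^N max(ν − ⟨ω, pᵢ⟩, 0). Call a pair (ω, ν) feasible if ω ≠ 0 and ⟨ω, ρ⟩ ≤ ν for all ρ ∈ M. Suppose (ω*, ν*) is feasible, F(ω*, ν*) ≤ F(ω, ν) for every feasible pair (ω, ν), and there exists an index i with ⟨ω*, pᵢ⟩ < ν*. Then the hyperplane { ρ : ⟨ω*, ρ⟩ = ν* } is a supporting hyperplane for M, i.e., sup_{ρ ∈ M} ⟨ω*, ρ⟩ = ν*. -/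
import Mathlib


open scoped RealInnerProductSpace

theorem stmt13 (n N : ℕ) (hn : 1 ≤ n)
    (M : Set (EuclideanSpace ℝ (Fin n))) (hM : M.Nonempty)
    (p : Fin N → EuclideanSpace ℝ (Fin n))
    (F : EuclideanSpace ℝ (Fin n) × ℝ → ℝ)
    (hF : F = fun ων => ∑ i, max (ων.2 - ⟪ων.1, p i⟫) 0)
    (feasible : EuclideanSpace ℝ (Fin n) × ℝ → Prop)
    (hfeas : feasible = fun ων => ων.1 ≠ 0 ∧ ∀ ρ ∈ M, ⟪ων.1, ρ⟫ ≤ ων.2)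
    (ωstar : EuclideanSpace ℝ (Fin n)) (νstar : ℝ)
    (hfeasstar : feasible (ωstar, νstar))
    (hopt : ∀ ω ν, feasible (ω, ν) → F (ωstar, νstar) ≤ F (ω, ν))
    (hpt : ∃ i, ⟪ωstar, p i⟫ < νstar) :
    sSup ((fun ρ => ⟪ωstar, ρ⟫) '' M) = νstar := by
  subst hF hfeas
  obtain ⟨hω, hsupp⟩ := hfeasstar
  obtain ⟨i, hi⟩ := hpt
  set S := (fun ρ => ⟪ωstar, ρ⟫) '' M with hS
  have hSne : S.Nonempty := hM.image _
  have hub : ∀ x ∈ S, x ≤ νstar := by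
    rintro x ⟨ρ, hρ, rfl⟩; exact hsupp ρ hρ
  have hbdd : BddAbove S := ⟨νstar, hub⟩
  have hle : sSup S ≤ νstar := csSup_le hSne hub
  by_contra hne
  have hlt : sSup S < νstar := lt_of_le_of_ne hle hne
  set ν := max (sSup S) ⟪ωstar, p i⟫ with hν
  have hνlt : ν < νstar := max_lt hlt hi
  have hfeasν : (fun ων : EuclideanSpace ℝ (Fin n) × ℝ =>
      ων.1 ≠ 0 ∧ ∀ ρ ∈ M, ⟪ων.1, ρ⟫ ≤ ων.2) (ωstar, ν) := by
    refine ⟨hω, fun ρ hρ => ?_⟩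
    exact le_trans (le_csSup hbdd ⟨ρ, hρ, rfl⟩) (le_max_left _ _)
  have hFlt : (∑ j, max (ν - ⟪ωstar, p j⟫) 0) <
      ∑ j, max (νstar - ⟪ωstar, p j⟫) 0 := by
    refine Finset.sum_lt_sum (fun j _ => ?_) ⟨i, Finset.mem_univ i, ?_⟩
    · exact max_le_max (by linarith) le_rfl
    · have h1 : ν - ⟪ωstar, p i⟫ < νstar - ⟪ωstar, p i⟫ := by linarith
      have h2 : (0 : ℝ) < νstar - ⟪ωstar, p i⟫ := by linarith
      calc max (ν - ⟪ωstar, p i⟫) 0 < νstar - ⟪ωstar, p i⟫ := max_lt h1 h2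
        _ ≤ max (νstar - ⟪ωstar, p i⟫) 0 := le_max_left _ _
  exact absurd (hopt ωstar ν hfeasν) (not_le.mpr hFlt)
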